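/- Let n ≥ 2, N ≥ 1 and Δ ≥ 0. Under the uniform probability measure on ((Σ_k^n × Σ_k^n))^N, the probability of the event { samples : α̃ − Q(n) − Δ ≤ α_k ≤ α̃ + Δ }, where α̃ = (1/(nN)) Σ_{i=1}^N d_E(x_i,y_i), is at least 1 − 2·exp(−N·n·Δ²). -/

import Mathlib

open Filter

/-- Costs for the Levenshtein distance (formerly in Mathlib's
`Mathlib/Data/List/EditDistance/Defs.lean`, since removed). -/
structure Levenshtein.Cost (α β δ : Type*) where
  /-- Cost to delete an element from a list. -/
  delete : α → δ
  /-- Cost in insert an element into a list. -/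
  insert : β → δ
  /-- Cost to substitute one element for another in a list. -/
  substitute : α → β → δ

/-- The default cost structure: unit costs, and a match costs `0`. -/
def Levenshtein.defaultCost {α : Type*} [DecidableEq α] : Levenshtein.Cost α α ℕ where
  delete _ := 1
  insert _ := 1
  substitute a b := if a = b then 0 else 1

/-- Helper for `suffixLevenshtein` (old Mathlib definition). -/
def Levenshtein.impl {α β δ : Type*} [AddZeroClass δ] [Min δ]
    (C : Levenshtein.Cost α β δ) (xs : List α) (y : β) (d : {r : List δ // 0 < r.length}) :
    {r : List δ // 0 < r.length} :=
  let ⟨ds, w⟩ := d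
  xs.zip (ds.zip ds.tail) |>.foldr
    (init := ⟨[ds.getLast (List.length_pos_iff.mp w) + C.insert y], by simp⟩)
    (fun ⟨x, d₀, d₁⟩ ⟨r, w⟩ =>
      ⟨min (C.delete x + r[0]) (min (C.insert y + d₀) (C.substitute x y + d₁)) :: r, by simp⟩)

/-- `suffixLevenshtein C xs ys` computes the Levenshtein distance
from each suffix of `xs` to `ys` (old Mathlib definition). -/
def suffixLevenshtein {α β δ : Type*} [AddZeroClass δ] [Min δ]
    (C : Levenshtein.Cost α β δ) (xs : List α) (ys : List β) :
    {r : List δ // 0 < r.length} :=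
  ys.foldr
    (Levenshtein.impl C xs)
    (xs.foldr (init := ⟨[0], by simp⟩) (fun a ⟨r, w⟩ => ⟨(C.delete a + r[0]) :: r, by simp⟩))

/-- The Levenshtein distance between two lists (old Mathlib definition). -/
def levenshtein {α β δ : Type*} [AddZeroClass δ] [Min δ]
    (C : Levenshtein.Cost α β δ) (xs : List α) (ys : List β) : δ :=
  let ⟨r, w⟩ := suffixLevenshtein C xs ys
  r[0]

/-- Edit distance between two strings over `Fin k`, with unit costs for
substitution, deletion and insertion, and cost `0` for a match. -/
def editDist {k : ℕ} (x y : List (Fin k)) : ℕ :=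
  levenshtein Levenshtein.defaultCost x y

/-- `e_k(n)`: the average edit distance between two independent uniformly
random strings of length `n` over an alphabet of size `k`. -/
noncomputable def avgEditDist (k n : ℕ) : ℝ :=
  ((k : ℝ) ^ (2 * n))⁻¹ *
    ∑ x : Fin n → Fin k, ∑ y : Fin n → Fin k,
      (editDist (List.ofFn x) (List.ofFn y) : ℝ)

/-- `α_k(n) = e_k(n)/n`. -/
noncomputable def alphaN (k n : ℕ) : ℝ := avgEditDist k n / n

/-- The convergence-rate bound `Q(n)`. -/
noncomputable def Qbound (n : ℕ) : ℝ :=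
  Real.sqrt (2 / ((n : ℝ) - 1) * (((n : ℝ) + 1) / ((n : ℝ) - 1) +
    Real.log ((n : ℝ) - 1))) + 1 / ((n : ℝ) - 1)

/-- The sample mean `α̃` of the normalized edit distance over `N` pairs. -/
noncomputable def sampleMean (k n N : ℕ)
    (ω : Fin N → ((Fin n → Fin k) × (Fin n → Fin k))) : ℝ :=
  (1 / ((n : ℝ) * N)) *
    ∑ i : Fin N, (editDist (List.ofFn (ω i).1) (List.ofFn (ω i).2) : ℝ)

/-!
The total `∑ᵢ d_E(xᵢ, yᵢ) = n N α̃` is a function of `2 n N` independent uniform letters, and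
changing one letter is a substitution in one string, which changes the edit distance of its pair
by at most one. McDiarmid's inequality, obtained from Hoeffding's lemma by conditioning on all
letters but one at a time, therefore gives `|α̃ - α_k(n)| < Δ` outside a set of probability at
most `2 exp(-2 (n N Δ)² / (2 n N)) = 2 exp(-N n Δ²)`. On that event the sandwich
`α_k(n) - Q(n) ≤ α_k ≤ α_k(n)` yields the interval.
-/

open scoped BigOperators
open Finset

theorem Levenshtein.ext_getElem_zero_tail {δ : Type*} {S T : {r : List δ // 0 < r.length}}
    (h₀ : S.1[0]'S.2 = T.1[0]'T.2) (h : S.1.tail = T.1.tail) : S = T := by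
  match S, T with
  | ⟨_ :: _, _⟩, ⟨_ :: _, _⟩ => simp_all

section Levenshtein

variable {α β δ : Type*} [AddZeroClass δ] [Min δ] (C : Levenshtein.Cost α β δ)

theorem Levenshtein.impl_length (xs : List α) (y : β) (d : {r : List δ // 0 < r.length})
    (w : d.1.length = xs.length + 1) :
    (Levenshtein.impl C xs y d).1.length = xs.length + 1 := by
  induction xs generalizing d with
  | nil => rfl
  | cons x xs ih =>
    match d, w with
    | ⟨_ :: d₂ :: ds, _⟩, w =>
      have := ih ⟨d₂ :: ds, by simp⟩ (by simpa using w)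
      simp only [Levenshtein.impl, List.zip_cons_cons, List.tail_cons, List.foldr_cons] at this ⊢
      simpa using this

theorem suffixLevenshtein_length (xs : List α) (ys : List β) :
    (suffixLevenshtein C xs ys).1.length = xs.length + 1 := by
  induction ys with
  | nil =>
    induction xs with
    | nil => rfl
    | cons _ xs ih =>
      simp only [suffixLevenshtein, List.foldr_nil, List.foldr_cons] at ih ⊢
      simpa using ih
  | cons y ys ih => exact Levenshtein.impl_length C xs y _ ih

theorem Levenshtein.impl_cons (x : α) (xs : List α) (y : β) (d : δ) (ds : List δ) (w)
    (w' : 0 < ds.length) :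
    Levenshtein.impl C (x :: xs) y ⟨d :: ds, w⟩ =
      let ⟨r, w⟩ := Levenshtein.impl C xs y ⟨ds, w'⟩
      ⟨min (C.delete x + r[0]) (min (C.insert y + d) (C.substitute x y + ds[0])) :: r, by simp⟩ :=
  match ds, w' with | _ :: _, _ => rfl

theorem suffixLevenshtein_cons_left (x : α) (xs : List α) (ys : List β) :
    suffixLevenshtein C (x :: xs) ys =
      ⟨levenshtein C (x :: xs) ys :: (suffixLevenshtein C xs ys).1, by simp⟩ := by
  induction ys with
  | nil => rfl
  | cons y ys ih =>
    apply Levenshtein.ext_getElem_zero_tail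
    · rfl
    change (Levenshtein.impl C (x :: xs) y (suffixLevenshtein C (x :: xs) ys)).1.tail = _
    rw [ih, Levenshtein.impl_cons (w' := by simp [suffixLevenshtein_length])]
    rfl

theorem levenshtein_cons_nil (x : α) (xs : List α) :
    levenshtein C (x :: xs) [] = C.delete x + levenshtein C xs [] := rfl

theorem levenshtein_nil_cons (y : β) (ys : List β) :
    levenshtein C [] (y :: ys) = levenshtein C [] ys + C.insert y := by
  have h := suffixLevenshtein_length C [] ys
  change (Levenshtein.impl C [] y (suffixLevenshtein C [] ys)).1[0]'(Levenshtein.impl C [] y _).2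
    = (suffixLevenshtein C [] ys).1[0]'(suffixLevenshtein C [] ys).2 + C.insert y
  generalize suffixLevenshtein C [] ys = S at h ⊢
  match S, h with
  | ⟨[_], _⟩, _ => rfl

theorem Levenshtein.impl_cons_getElem_zero (x : α) (xs : List α) (y : β) (d : δ)
    (S : {r : List δ // 0 < r.length}) (w) :
    (Levenshtein.impl C (x :: xs) y ⟨d :: S.1, w⟩).1[0]'(Levenshtein.impl C (x :: xs) y _).2
      = min (C.delete x + (Levenshtein.impl C xs y S).1[0]'(Levenshtein.impl C xs y S).2)
          (min (C.insert y + d) (C.substitute x y + S.1[0]'S.2)) := by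
  obtain ⟨ds, w'⟩ := S
  match ds, w' with
  | _ :: _, _ => rfl

theorem levenshtein_cons_cons (x : α) (xs : List α) (y : β) (ys : List β) :
    levenshtein C (x :: xs) (y :: ys) =
      min (C.delete x + levenshtein C xs (y :: ys))
        (min (C.insert y + levenshtein C (x :: xs) ys)
          (C.substitute x y + levenshtein C xs ys)) := by
  change (Levenshtein.impl C (x :: xs) y (suffixLevenshtein C (x :: xs) ys)).1[0]'
      (Levenshtein.impl C (x :: xs) y _).2 = _
  rw [suffixLevenshtein_cons_left, Levenshtein.impl_cons_getElem_zero]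
  rfl

end Levenshtein

section DefaultCost

variable {α : Type*} [DecidableEq α]

local notation "lev" => levenshtein (Levenshtein.defaultCost : Levenshtein.Cost α α ℕ)

theorem levenshtein_defaultCost_nil_left (ys : List α) : lev [] ys = ys.length := by
  induction ys with
  | nil => rfl
  | cons y ys ih => rw [levenshtein_nil_cons, ih]; rfl

theorem levenshtein_defaultCost_nil_right (xs : List α) : lev xs [] = xs.length := by
  induction xs with
  | nil => rfl
  | cons x xs ih => rw [levenshtein_cons_nil, ih]; exact Nat.add_comm _ _

theorem levenshtein_defaultCost_cons_cons (x y : α) (xs ys : List α) :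
    lev (x :: xs) (y :: ys) =
      min (1 + lev xs (y :: ys))
        (min (1 + lev (x :: xs) ys) ((if x = y then 0 else 1) + lev xs ys)) :=
  levenshtein_cons_cons _ x xs y ys

theorem levenshtein_defaultCost_comm (xs ys : List α) : lev xs ys = lev ys xs := by
  induction xs generalizing ys with
  | nil => rw [levenshtein_defaultCost_nil_left, levenshtein_defaultCost_nil_right]
  | cons x xs ihx =>
    induction ys with
    | nil => rw [levenshtein_defaultCost_nil_left, levenshtein_defaultCost_nil_right]
    | cons y ys ihy =>
      rw [levenshtein_defaultCost_cons_cons, levenshtein_defaultCost_cons_cons, ihx, ihx, ihy,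
        min_left_comm, eq_comm]
      simp only [eq_comm (a := x)]

theorem levenshtein_defaultCost_cons_le_cons_add_one {x x' : α} {xs xs' : List α}
    (htail : ∀ ys, lev xs ys ≤ lev xs' ys + 1)
    (hhead : ∀ y ys, (if x = y then 0 else 1) + lev xs ys ≤
      (if x' = y then 0 else 1) + lev xs' ys + 1) (ys : List α) :
    lev (x :: xs) ys ≤ lev (x' :: xs') ys + 1 := by
  induction ys with
  | nil =>
    rw [levenshtein_cons_nil, levenshtein_cons_nil]
    exact (Nat.add_le_add_left (htail []) 1).trans_eq (Nat.add_assoc _ _ _).symm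
  | cons y ys ih =>
    rw [levenshtein_defaultCost_cons_cons, levenshtein_defaultCost_cons_cons]
    have := htail (y :: ys)
    have := hhead y ys
    omega

theorem levenshtein_defaultCost_set_le (xs ys : List α) (i : ℕ) (a : α) :
    lev (xs.set i a) ys ≤ lev xs ys + 1 := by
  induction xs generalizing i ys with
  | nil => simp
  | cons x xs ih =>
    cases i with
    | zero =>
      refine levenshtein_defaultCost_cons_le_cons_add_one (fun _ => Nat.le_succ _)
        (fun y _ => ?_) ys
      split_ifs <;> omega
    | succ i =>
      refine levenshtein_defaultCost_cons_le_cons_add_one (ih · i) (fun y ys => ?_) ys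
      have := ih ys i
      omega

end DefaultCost

theorem editDist_comm {k : ℕ} (x y : List (Fin k)) : editDist x y = editDist y x :=
  levenshtein_defaultCost_comm x y

theorem editDist_set_left_le {k : ℕ} (x y : List (Fin k)) (i : ℕ) (a : Fin k) :
    editDist (x.set i a) y ≤ editDist x y + 1 :=
  levenshtein_defaultCost_set_le x y i a

theorem editDist_set_right_le {k : ℕ} (x y : List (Fin k)) (i : ℕ) (a : Fin k) :
    editDist x (y.set i a) ≤ editDist x y + 1 := by
  rw [editDist_comm, editDist_comm x]
  exact editDist_set_left_le y x i a

theorem List.ofFn_update {α : Type*} {n : ℕ} (u : Fin n → α) (i : Fin n) (a : α) :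
    List.ofFn (Function.update u i a) = (List.ofFn u).set i a := by
  refine List.ext_getElem (by simp) fun j hj _ => ?_
  simp [Function.update_apply, List.getElem_set, Fin.ext_iff, eq_comm]

theorem expect_fin_cons {κ M : Type*} [Fintype κ] [AddCommMonoid M] [Module ℚ≥0 M] {m : ℕ}
    (F : (Fin (m + 1) → κ) → M) :
    𝔼 ω, F ω = 𝔼 ω : Fin m → κ, 𝔼 a, F (Fin.cons a ω) := by
  rw [Fintype.expect_equiv (Fin.consEquiv fun _ => κ).symm F (fun p => F (Fin.cons p.1 p.2))
    (fun ω => by simp [Fin.consEquiv]), Finset.expect_comm, ← Finset.expect_product',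
    Finset.univ_product_univ]

theorem expect_comp_eval {ι β M : Type*} [Fintype ι] [DecidableEq ι] [Fintype β] [Nonempty β]
    [AddCommMonoid M] [Module ℚ≥0 M] (g : β → M) (i : ι) :
    𝔼 σ : ι → β, g (σ i) = 𝔼 b, g b := by
  rw [Fintype.expect_equiv (Equiv.piSplitAt i fun _ => β) (fun σ => g (σ i)) (fun p => g p.1)
      fun _ => rfl,
    ← Finset.univ_product_univ, Finset.expect_product]
  simp only [Fintype.expect_const]

theorem expect_sum_comp_eval {ι β : Type*} [Fintype ι] [DecidableEq ι] [Fintype β] [Nonempty β]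
    (g : β → ℝ) : 𝔼 σ : ι → β, ∑ i, g (σ i) = Fintype.card ι * 𝔼 b, g b := by
  rw [Finset.expect_sum_comm]
  simp only [expect_comp_eval, Finset.sum_const, Finset.card_univ, nsmul_eq_mul]

theorem expect_eq_integral_uniformOfFintype {κ : Type*} [Fintype κ] [Nonempty κ]
    [MeasurableSpace κ] [MeasurableSingletonClass κ] (h : κ → ℝ) :
    𝔼 x, h x = ∫ x, h x ∂(PMF.uniformOfFintype κ).toMeasure := by
  rw [PMF.integral_eq_sum, Fintype.expect_eq_sum_div_card, Finset.sum_div]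
  simp [PMF.uniformOfFintype_apply, div_eq_inv_mul]

/-- Hoeffding's lemma. -/
theorem expect_exp_mul_sub_expect_le {κ : Type*} [Fintype κ] [Nonempty κ] {g : κ → ℝ} {a b : ℝ}
    (hg : ∀ x, g x ∈ Set.Icc a b) (t : ℝ) :
    𝔼 x, Real.exp (t * (g x - 𝔼 y, g y)) ≤ Real.exp ((b - a) ^ 2 * t ^ 2 / 8) := by
  let _ : MeasurableSpace κ := ⊤
  have := (ProbabilityTheory.hasSubgaussianMGF_of_mem_Icc (μ := (PMF.uniformOfFintype κ).toMeasure)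
    Measurable.of_discrete.aemeasurable (MeasureTheory.ae_of_all _ hg)).mgf_le t
  rw [ProbabilityTheory.mgf, ← expect_eq_integral_uniformOfFintype,
    ← expect_eq_integral_uniformOfFintype] at this
  convert this using 2
  push_cast
  rw [div_pow, Real.norm_eq_abs, sq_abs]
  ring

theorem card_filter_le_exp_mul_expect {Ω : Type*} [Fintype Ω] (g : Ω → ℝ) (s : ℝ) {t : ℝ}
    (ht : 0 ≤ t) :
    (#{ω | s ≤ g ω} : ℝ) ≤ Fintype.card Ω * (Real.exp (-(t * s)) * 𝔼 ω, Real.exp (t * g ω)) := by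
  rw [Finset.mul_expect, Fintype.card_mul_expect, Finset.card_filter, Nat.cast_sum]
  refine Finset.sum_le_sum fun ω _ => ?_
  split_ifs with h
  · rw [Nat.cast_one, ← Real.exp_add]
    exact Real.one_le_exp (by nlinarith)
  · rw [Nat.cast_zero]; positivity

def HasBoundedDifferences {ι κ : Type*} [DecidableEq ι] (f : (ι → κ) → ℝ) (c : ℝ) : Prop :=
  ∀ ω i a, f (Function.update ω i a) ≤ f ω + c

namespace HasBoundedDifferences

variable {ι κ : Type*}

section Update

variable [DecidableEq ι] {f : (ι → κ) → ℝ} {c : ℝ}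

theorem neg (hf : HasBoundedDifferences f c) : HasBoundedDifferences (fun ω => -f ω) c := by
  intro ω i a
  have := hf (Function.update ω i a) i (ω i)
  rw [Function.update_idem, Function.update_eq_self] at this
  linarith

theorem comp_equiv {ι' : Type*} [DecidableEq ι'] (hf : HasBoundedDifferences f c) (e : ι ≃ ι') :
    HasBoundedDifferences (fun ω => f (ω ∘ e)) c := by
  intro ω i a
  dsimp only
  rw [Function.update_comp_equiv]
  exact hf _ _ a

end Update

section Fin

variable [Fintype κ] [Nonempty κ]

theorem expect_cons {m : ℕ} {f : (Fin (m + 1) → κ) → ℝ} {c : ℝ}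
    (hf : HasBoundedDifferences f c) :
    HasBoundedDifferences (fun ω : Fin m → κ => 𝔼 a, f (Fin.cons a ω)) c := by
  intro ω i a
  calc 𝔼 b, f (Fin.cons b (Function.update ω i a))
      ≤ 𝔼 b, (f (Fin.cons b ω) + c) := by
        refine Finset.expect_le_expect fun b _ => ?_
        rw [Fin.cons_update]
        exact hf _ _ _
    _ = 𝔼 b, f (Fin.cons b ω) + c := by rw [Finset.expect_add_distrib, Fintype.expect_const]

theorem cons_mem_Icc {m : ℕ} {f : (Fin (m + 1) → κ) → ℝ} {c : ℝ}
    (hf : HasBoundedDifferences f c) (ω : Fin m → κ) :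
    ∃ b, ∀ a, f (Fin.cons a ω) ∈ Set.Icc b (b + c) := by
  obtain ⟨a₀, ha₀⟩ := Finite.exists_min fun a => f (Fin.cons a ω)
  refine ⟨f (Fin.cons a₀ ω), fun a => ⟨ha₀ a, ?_⟩⟩
  simpa only [Fin.update_cons_zero] using hf (Fin.cons a₀ ω) 0 a

theorem expect_exp_le_fin {m : ℕ} {f : (Fin m → κ) → ℝ} {c : ℝ}
    (hf : HasBoundedDifferences f c) (t : ℝ) :
    𝔼 ω, Real.exp (t * (f ω - 𝔼 ω', f ω')) ≤ Real.exp (m * c ^ 2 * t ^ 2 / 8) := by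
  induction m with
  | zero => simp
  | succ m ih =>
    set g := fun ω : Fin m → κ => 𝔼 a, f (Fin.cons a ω)
    have hmean : 𝔼 ω, g ω = 𝔼 ω, f ω := (expect_fin_cons f).symm
    have hslice (ω : Fin m → κ) :
        𝔼 a, Real.exp (t * (f (Fin.cons a ω) - g ω)) ≤ Real.exp (c ^ 2 * t ^ 2 / 8) := by
      obtain ⟨b, hb⟩ := hf.cons_mem_Icc ω
      simpa using expect_exp_mul_sub_expect_le hb t
    calc 𝔼 ω, Real.exp (t * (f ω - 𝔼 ω', f ω'))
        = 𝔼 ω, (𝔼 a, Real.exp (t * (f (Fin.cons a ω) - g ω))) *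
            Real.exp (t * (g ω - 𝔼 ω', g ω')) := by
          rw [expect_fin_cons, hmean]
          refine Finset.expect_congr rfl fun ω _ => ?_
          rw [Finset.expect_mul]
          refine Finset.expect_congr rfl fun a _ => ?_
          rw [← Real.exp_add]
          ring_nf
      _ ≤ 𝔼 ω, Real.exp (c ^ 2 * t ^ 2 / 8) * Real.exp (t * (g ω - 𝔼 ω', g ω')) :=
          Finset.expect_le_expect fun ω _ =>
            mul_le_mul_of_nonneg_right (hslice ω) (Real.exp_nonneg _)
      _ ≤ Real.exp (c ^ 2 * t ^ 2 / 8) * Real.exp (m * c ^ 2 * t ^ 2 / 8) := by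
          rw [← Finset.mul_expect]
          exact mul_le_mul_of_nonneg_left (ih hf.expect_cons) (Real.exp_nonneg _)
      _ = Real.exp ((m + 1 : ℕ) * c ^ 2 * t ^ 2 / 8) := by
          rw [← Real.exp_add]
          push_cast
          ring_nf

end Fin

variable [Fintype ι] [DecidableEq ι] [Fintype κ] [Nonempty κ] {f : (ι → κ) → ℝ} {c : ℝ}

theorem expect_exp_le (hf : HasBoundedDifferences f c) (t : ℝ) :
    𝔼 ω, Real.exp (t * (f ω - 𝔼 ω', f ω')) ≤ Real.exp (Fintype.card ι * c ^ 2 * t ^ 2 / 8) := by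
  let e := (Equiv.arrowCongr (Fintype.equivFin ι) (Equiv.refl κ)).symm
  have hmean : 𝔼 ω, f ω = 𝔼 ω, f (e ω) := Fintype.expect_equiv e.symm _ _ (by simp)
  rw [hmean, Fintype.expect_equiv e.symm _ (fun ω => Real.exp (t * (f (e ω) - 𝔼 ω', f (e ω'))))
    (by simp)]
  exact expect_exp_le_fin (hf.comp_equiv (Fintype.equivFin ι)) t

theorem card_filter_le (hf : HasBoundedDifferences f c) {ε : ℝ} (hε : 0 ≤ ε) :
    (#{ω | ε ≤ f ω - 𝔼 ω', f ω'} : ℝ) ≤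
      Fintype.card (ι → κ) * Real.exp (-(2 * ε ^ 2 / (Fintype.card ι * c ^ 2))) := by
  set v := (Fintype.card ι : ℝ) * c ^ 2
  have hv : 0 ≤ v := by positivity
  -- the optimal Chernoff parameter
  set t := 4 * ε / v
  refine (card_filter_le_exp_mul_expect _ ε (by positivity : 0 ≤ t)).trans ?_
  gcongr
  calc Real.exp (-(t * ε)) * 𝔼 ω, Real.exp (t * (f ω - 𝔼 ω', f ω'))
      ≤ Real.exp (-(t * ε)) * Real.exp (v * t ^ 2 / 8) :=
        mul_le_mul_of_nonneg_left (hf.expect_exp_le t) (Real.exp_nonneg _)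
    _ = Real.exp (-(2 * ε ^ 2 / v)) := by
        rw [← Real.exp_add]
        congr 1
        rcases hv.eq_or_lt with h | h
        · simp [t, ← h]
        · simp only [t]
          field_simp
          ring

/-- McDiarmid's inequality. -/
theorem card_filter_abs_le (hf : HasBoundedDifferences f c) {ε : ℝ} (hε : 0 ≤ ε) :
    (#{ω | ε ≤ |f ω - 𝔼 ω', f ω'|} : ℝ) ≤
      2 * Fintype.card (ι → κ) * Real.exp (-(2 * ε ^ 2 / (Fintype.card ι * c ^ 2))) := by
  classical
  have hsub : ({ω | ε ≤ |f ω - 𝔼 ω', f ω'|} : Finset (ι → κ)) ⊆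
      ({ω | ε ≤ f ω - 𝔼 ω', f ω'} : Finset _) ∪ ({ω | ε ≤ -f ω - 𝔼 ω', -f ω'} : Finset _) := by
    intro ω
    simp only [Finset.mem_filter, Finset.mem_univ, true_and, Finset.mem_union,
      Finset.expect_neg_distrib, le_abs']
    intro h
    rcases h with h | h
    · right; linarith
    · left; exact h
  calc (#{ω | ε ≤ |f ω - 𝔼 ω', f ω'|} : ℝ)
      ≤ #{ω | ε ≤ f ω - 𝔼 ω', f ω'} + #{ω | ε ≤ -f ω - 𝔼 ω', -f ω'} := by
        exact_mod_cast (Finset.card_le_card hsub).trans (Finset.card_union_le _ _)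
    _ ≤ _ := by linarith [hf.card_filter_le hε, hf.neg.card_filter_le hε]

end HasBoundedDifferences

def pairEditDist {k n : ℕ} (p : (Fin n → Fin k) × (Fin n → Fin k)) : ℝ :=
  editDist (List.ofFn p.1) (List.ofFn p.2)

/-- `n N α̃` in the paper's notation. -/
def totalEditDist {k n N : ℕ} (σ : Fin N → (Fin n → Fin k) × (Fin n → Fin k)) : ℝ :=
  ∑ i, pairEditDist (σ i)

theorem expect_totalEditDist (k n N : ℕ) [NeZero k] :
    𝔼 σ : Fin N → (Fin n → Fin k) × (Fin n → Fin k), totalEditDist σ = N * avgEditDist k n := by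
  simp only [totalEditDist]
  rw [expect_sum_comp_eval, Fintype.card_fin, Fintype.expect_eq_sum_div_card,
    Fintype.sum_prod_type, avgEditDist, div_eq_inv_mul]
  simp only [pairEditDist, Fintype.card_prod, Fintype.card_fun, Fintype.card_fin]
  push_cast
  ring_nf

/-- The `2 n N` letters of a sample are the independent coordinates to which McDiarmid's
inequality is applied. -/
def sampleCoords (k n N : ℕ) :
    (Fin N × (Fin n ⊕ Fin n) → Fin k) ≃ (Fin N → (Fin n → Fin k) × (Fin n → Fin k)) :=
  (Equiv.curry _ _ _).trans (Equiv.arrowCongr (Equiv.refl _) (Equiv.sumArrowEquivProdArrow _ _ _))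

theorem sampleCoords_apply {k n N : ℕ} (ω : Fin N × (Fin n ⊕ Fin n) → Fin k) (i : Fin N) :
    sampleCoords k n N ω i = (fun j => ω (i, .inl j), fun j => ω (i, .inr j)) := rfl

theorem pairEditDist_sampleCoords_update_le {k n N : ℕ} (ω : Fin N × (Fin n ⊕ Fin n) → Fin k)
    (i : Fin N) (s : Fin n ⊕ Fin n) (a : Fin k) :
    pairEditDist (sampleCoords k n N (Function.update ω (i, s) a) i) ≤
      pairEditDist (sampleCoords k n N ω i) + 1 := by
  simp only [pairEditDist, sampleCoords_apply]
  cases s with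
  | inl j =>
    have h₁ : (fun j' => Function.update ω (i, .inl j) a (i, .inl j')) =
        Function.update (fun j' => ω (i, .inl j')) j a := by
      funext j'; simp [Function.update_apply]
    have h₂ : (fun j' => Function.update ω (i, .inl j) a (i, .inr j')) =
        fun j' => ω (i, .inr j') := by
      funext j'; simp
    rw [h₁, h₂, List.ofFn_update]
    exact_mod_cast editDist_set_left_le _ _ _ a
  | inr j =>
    have h₁ : (fun j' => Function.update ω (i, .inr j) a (i, .inl j')) =
        fun j' => ω (i, .inl j') := by
      funext j'; simp
    have h₂ : (fun j' => Function.update ω (i, .inr j) a (i, .inr j')) =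
        Function.update (fun j' => ω (i, .inr j')) j a := by
      funext j'; simp [Function.update_apply]
    rw [h₁, h₂, List.ofFn_update]
    exact_mod_cast editDist_set_right_le _ _ _ a

theorem hasBoundedDifferences_totalEditDist (k n N : ℕ) :
    HasBoundedDifferences (fun ω => totalEditDist (sampleCoords k n N ω)) 1 := by
  rintro ω ⟨i, s⟩ a
  have hother : ∀ i' ∈ Finset.univ.erase i,
      sampleCoords k n N (Function.update ω (i, s) a) i' = sampleCoords k n N ω i' := by
    intro i' hi'
    simp [sampleCoords_apply, Finset.ne_of_mem_erase hi']
  simp only [totalEditDist]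
  rw [← Finset.add_sum_erase _ _ (Finset.mem_univ i),
    ← Finset.add_sum_erase _ _ (Finset.mem_univ i),
    Finset.sum_congr rfl fun i' hi' => by rw [hother i' hi']]
  linarith [pairEditDist_sampleCoords_update_le ω i s a]

theorem card_filter_abs_sampleMean_sub_alphaN_le (k n N : ℕ) [NeZero k] (hn : n ≠ 0) (hN : N ≠ 0)
    {Δ : ℝ} (hΔ : 0 ≤ Δ) :
    (#{ω | Δ ≤ |sampleMean k n N (sampleCoords k n N ω) - alphaN k n|} : ℝ) ≤
      2 * Fintype.card (Fin N × (Fin n ⊕ Fin n) → Fin k) * Real.exp (-(N * n * Δ ^ 2)) := by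
  have hnN : (0 : ℝ) < n * N := by positivity
  have hmean : 𝔼 ω, totalEditDist (sampleCoords k n N ω) = n * N * alphaN k n := by
    rw [Fintype.expect_equiv (sampleCoords k n N) _ totalEditDist fun _ => rfl,
      expect_totalEditDist, alphaN]
    field_simp
  have hevent : ∀ ω, Δ ≤ |sampleMean k n N (sampleCoords k n N ω) - alphaN k n| ↔
      n * N * Δ ≤
        |totalEditDist (sampleCoords k n N ω) - 𝔼 ω', totalEditDist (sampleCoords k n N ω')| := by
    intro ω
    have hdiff : sampleMean k n N (sampleCoords k n N ω) - alphaN k n =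
        (totalEditDist (sampleCoords k n N ω) - n * N * alphaN k n) / (n * N) := by
      change 1 / (n * N : ℝ) * totalEditDist _ - _ = _
      field_simp
    rw [hmean, hdiff, abs_div, abs_of_pos hnN, le_div_iff₀ hnN, mul_comm]
  rw [Finset.filter_congr fun ω _ => hevent ω]
  refine ((hasBoundedDifferences_totalEditDist k n N).card_filter_abs_le
    (by positivity)).trans_eq ?_
  simp only [Fintype.card_prod, Fintype.card_sum, Fintype.card_fin]
  congr 3
  push_cast
  field_simp
  ring

theorem card_sub_card_le_natCard_subtype {Ω Ω' : Type*} [Fintype Ω] [Fintype Ω'] (e : Ω ≃ Ω')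
    {p : Ω' → Prop} (s : Finset Ω) (h : ∀ ω ∉ s, p (e ω)) :
    (Fintype.card Ω' : ℝ) - #s ≤ Nat.card {σ // p σ} := by
  classical
  rw [← Fintype.card_congr e, Nat.card_congr (e.subtypeEquivOfSubtype (p := p)).symm,
    Nat.card_eq_fintype_card, Fintype.card_subtype, sub_le_iff_le_add, ← Finset.card_univ]
  have hcover : Finset.univ ⊆ ({ω | p (e ω)} : Finset Ω) ∪ s := fun ω _ => by
    by_cases hω : ω ∈ s <;> simp [hω, h ω]
  exact_mod_cast (Finset.card_le_card hcover).trans (Finset.card_union_le _ _)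

theorem confidence_interval_alpha_general (k n N : ℕ) (hk : 2 ≤ k) (hn : 2 ≤ n)
    (hN : 1 ≤ N) (Δ : ℝ) (hΔ : 0 ≤ Δ) (α : ℝ)
    (hsandwich : ∀ m : ℕ, 2 ≤ m → alphaN k m - Qbound m ≤ α ∧ α ≤ alphaN k m) :
    1 - 2 * Real.exp (-(N * n * Δ ^ 2)) ≤
      (Nat.card {ω : Fin N → ((Fin n → Fin k) × (Fin n → Fin k)) //
          sampleMean k n N ω - Qbound n - Δ ≤ α ∧
          α ≤ sampleMean k n N ω + Δ} : ℝ) /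
        (Fintype.card (Fin N → ((Fin n → Fin k) × (Fin n → Fin k))) : ℝ) := by
  have : NeZero k := ⟨by omega⟩
  obtain ⟨hlow, hhigh⟩ := hsandwich n hn
  have hgood : ∀ ω ∉ ({ω | Δ ≤ |sampleMean k n N (sampleCoords k n N ω) - alphaN k n|} :
      Finset _), sampleMean k n N (sampleCoords k n N ω) - Qbound n - Δ ≤ α ∧
        α ≤ sampleMean k n N (sampleCoords k n N ω) + Δ := by
    intro ω hω
    simp only [Finset.mem_filter, Finset.mem_univ, true_and, not_le, abs_lt] at hω
    constructor <;> linarith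
  have hcount := card_sub_card_le_natCard_subtype (sampleCoords k n N)
    (p := fun σ => sampleMean k n N σ - Qbound n - Δ ≤ α ∧ α ≤ sampleMean k n N σ + Δ) _ hgood
  have htail := card_filter_abs_sampleMean_sub_alphaN_le k n N (by omega) (by omega) hΔ
  have hcard : (0 : ℝ) < Fintype.card (Fin N → (Fin n → Fin k) × (Fin n → Fin k)) := by
    exact_mod_cast Fintype.card_pos
  rw [Fintype.card_congr (sampleCoords k n N)] at htail
  rw [le_div_iff₀ hcard]
  linarith

/-- Confidence intervals for `α_k`: under the uniform measure on `N`-tuples of pairs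
of strings of length `n ≥ 2`, the probability that
`α̃ − Q(n) − Δ ≤ α_k ≤ α̃ + Δ` is at least `1 − 2·exp(−N·n·Δ²)`. -/
theorem confidence_interval_alpha (k n N : ℕ) (hk : 2 ≤ k) (hn : 2 ≤ n)
    (hN : 1 ≤ N) (Δ : ℝ) (hΔ : 0 ≤ Δ) (α : ℝ)
    (hconv : Tendsto (fun m => alphaN k m) atTop (nhds α))
    (hsandwich : ∀ m : ℕ, 2 ≤ m → alphaN k m - Qbound m ≤ α ∧ α ≤ alphaN k m) :
    1 - 2 * Real.exp (-(N * n * Δ ^ 2)) ≤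
      (Nat.card {ω : Fin N → ((Fin n → Fin k) × (Fin n → Fin k)) //
          sampleMean k n N ω - Qbound n - Δ ≤ α ∧
          α ≤ sampleMean k n N ω + Δ} : ℝ) /
        (Fintype.card (Fin N → ((Fin n → Fin k) × (Fin n → Fin k))) : ℝ) :=
  confidence_interval_alpha_general k n N hk hn hN Δ hΔ α hsandwich
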